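/- Let p be an odd prime not dividing b, m = ν_p(b^{|b|_p} − 1), and n ≥ 1. Then |M_b(p^n)| = |M_b(p)| if n ≤ m, and |M_b(p^n)| = (n − m + 1)·|M_b(p)| if n > m. -/

import Mathlib

set_option linter.unusedSectionVars false
set_option maxHeartbeats 1000000

/-- Multiplicative order of `b` modulo `N`. -/
noncomputable def ord (b N : ℕ) : ℕ := orderOf (b : ZMod N)

/-- The Midy set of `N` to base `b`: divisors `d ≥ 2` of `|b|_N` such that for every
prime `q` dividing `gcd(b^(|b|_N/d) - 1, N)` one has `ν_q(N) ≤ ν_q(d)`. -/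
def MidySet (b N : ℕ) : Set ℕ :=
  {d | 2 ≤ d ∧ d ∣ ord b N ∧
    ∀ q : ℕ, q.Prime → q ∣ Nat.gcd (b ^ (ord b N / d) - 1) N →
      N.factorization q ≤ d.factorization q}

lemma ord_dvd_iff (b N k : ℕ) (hb : 1 ≤ b) [NeZero N] :
    N ∣ b ^ k - 1 ↔ ord b N ∣ k := by
  rw [← ZMod.natCast_eq_zero_iff]
  have h1 : (1:ℕ) ≤ b ^ k := Nat.one_le_pow _ _ hb
  rw [Nat.cast_sub h1]
  push_cast
  rw [sub_eq_zero, ← orderOf_dvd_iff_pow_eq_one, ord]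

lemma ord_pos (b N : ℕ) (h : Nat.Coprime b N) [NeZero N] : 0 < ord b N := by
  rw [ord, orderOf_pos_iff, isOfFinOrder_iff_pow_eq_one]
  refine ⟨N.totient, Nat.totient_pos.mpr (Nat.pos_of_ne_zero (NeZero.ne N)), ?_⟩
  obtain ⟨u, hu⟩ := (ZMod.isUnit_iff_coprime b N).mpr h
  rw [← hu, ← Units.val_pow_eq_pow_val, ZMod.pow_totient, Units.val_one]

section
variable {b p : ℕ} (hb : 2 ≤ b) (hp : p.Prime) (hodd : Odd p) (hpb : ¬ p ∣ b)
include hb hp hpb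

lemma ord_p_pos : 0 < ord b p := by
  haveI : NeZero p := ⟨hp.ne_zero⟩
  exact ord_pos b p (Nat.Coprime.symm ((Nat.Prime.coprime_iff_not_dvd hp).mpr hpb))

lemma p_dvd_sub_one : p ∣ b ^ ord b p - 1 := by
  haveI : NeZero p := ⟨hp.ne_zero⟩
  exact (ord_dvd_iff b p (ord b p) (by omega)).mpr dvd_rfl

lemma sub_one_ne_zero {k : ℕ} (hk : k ≠ 0) : b ^ k - 1 ≠ 0 := by
  have : 1 < b ^ k := by
    calc 1 < b := hb
    _ = b ^ 1 := (pow_one b).symm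
    _ ≤ b ^ k := Nat.pow_le_pow_right (by omega) (by omega)
  omega

lemma m_pos : 0 < (b ^ ord b p - 1).factorization p := by
  have he := ord_p_pos hb hp hpb
  have h1 := sub_one_ne_zero hb hp hpb (k := ord b p) (by omega)
  exact Nat.Prime.factorization_pos_of_dvd hp h1 (p_dvd_sub_one hb hp hpb)

lemma p_not_dvd_ord : ¬ p ∣ ord b p := by
  have hdvd : ord b p ∣ p - 1 := by
    rw [ord]
    apply orderOf_dvd_iff_pow_eq_one.mpr
    haveI : Fact p.Prime := ⟨hp⟩
    exact ZMod.pow_card_sub_one_eq_one (by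
      simpa [Ne, ZMod.natCast_eq_zero_iff] using hpb)
  intro hcon
  have h2 := hp.two_le
  have := Nat.le_of_dvd (by omega) (hcon.trans hdvd)
  omega

include hodd in
lemma lte_lemma {s : ℕ} (hs : s ≠ 0) :
    (b ^ (ord b p * s) - 1).factorization p
      = (b ^ ord b p - 1).factorization p + s.factorization p := by
  haveI : Fact p.Prime := ⟨hp⟩
  have h1 : 1 < b ^ ord b p := by
    calc 1 < b := hb
    _ = b ^ 1 := (pow_one b).symm
    _ ≤ b ^ ord b p := Nat.pow_le_pow_right (by omega) (ord_p_pos hb hp hpb)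
  have key := padicValNat.pow_sub_pow (p := p) hodd (x := b ^ ord b p) (y := 1) h1
    (by simpa using p_dvd_sub_one hb hp hpb)
    (fun h => hpb (hp.dvd_of_dvd_pow h)) hs
  simp only [one_pow, ← pow_mul] at key
  rw [Nat.factorization_def _ hp, Nat.factorization_def _ hp, Nat.factorization_def _ hp, key]

lemma ord_pow_le {n : ℕ} (hn : 1 ≤ n) (hnm : n ≤ (b ^ ord b p - 1).factorization p) :
    ord b (p ^ n) = ord b p := by
  haveI : NeZero p := ⟨hp.ne_zero⟩
  haveI : NeZero (p ^ n) := ⟨pow_ne_zero _ hp.ne_zero⟩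
  have hepos := ord_p_pos hb hp hpb
  apply Nat.dvd_antisymm
  · exact (ord_dvd_iff b (p ^ n) _ (by omega)).mp
      ((Nat.Prime.pow_dvd_iff_le_factorization hp
        (sub_one_ne_zero hb hp hpb (by omega))).mpr hnm)
  · have h1 : p ^ n ∣ b ^ ord b (p ^ n) - 1 := (ord_dvd_iff b (p ^ n) _ (by omega)).mpr dvd_rfl
    exact (ord_dvd_iff b p _ (by omega)).mp ((dvd_pow_self p (by omega)).trans h1)

include hodd in
lemma ord_pow_gt {n : ℕ} (hnm : (b ^ ord b p - 1).factorization p < n) :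
    ord b (p ^ n) = ord b p * p ^ (n - (b ^ ord b p - 1).factorization p) := by
  haveI : NeZero p := ⟨hp.ne_zero⟩
  haveI : NeZero (p ^ n) := ⟨pow_ne_zero _ hp.ne_zero⟩
  set e := ord b p with he
  set m := (b ^ e - 1).factorization p with hm
  have hepos := ord_p_pos hb hp hpb
  have hppos := hp.two_le
  apply Nat.dvd_antisymm
  · apply (ord_dvd_iff b (p ^ n) _ (by omega)).mp
    apply (Nat.Prime.pow_dvd_iff_le_factorization hp
      (sub_one_ne_zero hb hp hpb (by positivity))).mpr
    rw [lte_lemma hb hp hodd hpb (s := p ^ (n - m)) (by positivity)]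
    simp only [Nat.Prime.factorization_pow hp, Finsupp.single_eq_same]
    rw [← he, ← hm]
    omega
  · have hrpos : 0 < ord b (p ^ n) :=
      ord_pos b (p ^ n)
        (Nat.Coprime.pow_right _ (Nat.Coprime.symm ((Nat.Prime.coprime_iff_not_dvd hp).mpr hpb)))
    have h1 : p ^ n ∣ b ^ ord b (p ^ n) - 1 := (ord_dvd_iff b (p ^ n) _ (by omega)).mpr dvd_rfl
    have h2 : e ∣ ord b (p ^ n) :=
      (ord_dvd_iff b p _ (by omega)).mp ((dvd_pow_self p (by omega)).trans h1)
    obtain ⟨s, hs⟩ := h2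
    have hs0 : s ≠ 0 := by rintro rfl; simp at hs; omega
    have h3 : n ≤ m + s.factorization p := by
      rw [hs] at h1
      have := (Nat.Prime.pow_dvd_iff_le_factorization hp
        (sub_one_ne_zero hb hp hpb (by positivity))).mp h1
      rwa [lte_lemma hb hp hodd hpb hs0] at this
    have h4 : p ^ (n - m) ∣ s :=
      (Nat.Prime.pow_dvd_iff_le_factorization hp hs0).mpr (by omega)
    rw [hs]
    exact mul_dvd_mul_left e h4

lemma not_p_dvd_pow_div {d : ℕ} (hd : 2 ≤ d) (hdvd : d ∣ ord b p) :
    ¬ p ∣ b ^ (ord b p / d) - 1 := by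
  haveI : NeZero p := ⟨hp.ne_zero⟩
  intro h
  have hepos := ord_p_pos hb hp hpb
  have h1 : ord b p ∣ ord b p / d := (ord_dvd_iff b p _ (by omega)).mp h
  have h2 : 0 < ord b p / d := Nat.div_pos (Nat.le_of_dvd hepos hdvd) (by omega)
  have h3 : ord b p / d < ord b p := Nat.div_lt_self hepos hd
  have := Nat.le_of_dvd h2 h1
  omega

lemma midy_le {n : ℕ} (hn : 1 ≤ n) (hnm : n ≤ (b ^ ord b p - 1).factorization p) :
    MidySet b (p ^ n) = ↑((ord b p).divisors.erase 1) := by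
  have hepos := ord_p_pos hb hp hpb
  have hord := ord_pow_le hb hp hpb hn hnm
  ext d
  simp only [MidySet, Set.mem_setOf_eq, Finset.coe_erase, Set.mem_diff, Finset.mem_coe,
    Nat.mem_divisors, Set.mem_singleton_iff, hord]
  constructor
  · rintro ⟨h2, hdvd, -⟩
    exact ⟨⟨hdvd, by omega⟩, by omega⟩
  · rintro ⟨⟨hdvd, -⟩, hne⟩
    have hd1 : 1 ≤ d := Nat.pos_of_dvd_of_pos hdvd hepos
    have hd2 : 2 ≤ d := by omega
    refine ⟨hd2, hdvd, fun q hq hqd => ?_⟩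
    exfalso
    have hqp : q ∣ p ^ n := hqd.trans (Nat.gcd_dvd_right _ _)
    have : q = p := (Nat.prime_dvd_prime_iff_eq hq hp).mp (hq.dvd_of_dvd_pow hqp)
    subst this
    exact not_p_dvd_pow_div hb hp hpb hd2 hdvd (hqd.trans (Nat.gcd_dvd_left _ _))

include hodd in
lemma midy_gt {n : ℕ} (hnm : (b ^ ord b p - 1).factorization p < n) :
    MidySet b (p ^ n) = ↑(Finset.image (fun q : ℕ × ℕ => q.1 * p ^ q.2)
      (((ord b p).divisors.erase 1) ×ˢ
        Finset.range (n - (b ^ ord b p - 1).factorization p + 1))) := by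
  haveI : NeZero p := ⟨hp.ne_zero⟩
  have hepos := ord_p_pos hb hp hpb
  have hppos := hp.two_le
  have hmpos := m_pos hb hp hpb
  have hpe := p_not_dvd_ord hb hp hpb
  have hord := ord_pow_gt hb hp hodd hpb hnm
  set e := ord b p with he
  set m := (b ^ e - 1).factorization p with hm
  set t := n - m with ht
  ext d
  simp only [MidySet, Set.mem_setOf_eq, Finset.coe_image, Set.mem_image, Finset.mem_coe,
    Finset.mem_product, Finset.mem_erase, Nat.mem_divisors, Finset.mem_range, hord]
  constructor
  · rintro ⟨h2, hdvd, hcond⟩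
    have hd0 : d ≠ 0 := by omega
    set j := d.factorization p with hj
    set a := d / p ^ j with ha
    have hda : p ^ j * a = d := Nat.ordProj_mul_ordCompl_eq_self d p
    have hpa : ¬ p ∣ a := Nat.not_dvd_ordCompl hp hd0
    have ha0 : a ≠ 0 := by rintro h; rw [h, mul_zero] at hda; omega
    have hae : a ∣ e := by
      have h1 : a ∣ e * p ^ t := (Nat.ordCompl_dvd d p).trans hdvd
      have hcop : Nat.Coprime a (p ^ t) :=
        Nat.Coprime.pow_right _ (Nat.Coprime.symm ((Nat.Prime.coprime_iff_not_dvd hp).mpr hpa))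
      exact hcop.dvd_of_dvd_mul_right h1
    have hjt : j ≤ t := by
      have h1 : p ^ j ∣ e * p ^ t := (Nat.ordProj_dvd d p).trans hdvd
      have hcop : Nat.Coprime (p ^ j) e :=
        Nat.Coprime.pow_left _ ((Nat.Prime.coprime_iff_not_dvd hp).mpr hpe)
      have h2 : p ^ j ∣ p ^ t := (Nat.Coprime.dvd_of_dvd_mul_left hcop h1)
      exact (Nat.pow_dvd_pow_iff_le_right (by omega)).mp h2
    have ha1 : a ≠ 1 := by
      intro haeq
      rw [haeq, mul_one] at hda
      have hj1 : 1 ≤ j := by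
        rcases Nat.eq_zero_or_pos j with h | h
        · rw [h, pow_zero] at hda; omega
        · exact h
      have hrd : e * p ^ t / d = e * p ^ (t - j) := by
        rw [← hda, Nat.mul_div_assoc e (pow_dvd_pow p hjt), Nat.pow_div hjt (by omega)]
      have hpd : p ∣ b ^ (e * p ^ t / d) - 1 := by
        rw [hrd]
        exact (ord_dvd_iff b p _ (by omega)).mpr ⟨p ^ (t - j), rfl⟩
      have := hcond p hp (Nat.dvd_gcd hpd (dvd_pow_self p (by omega)))
      rw [← hda] at this
      simp only [Nat.Prime.factorization_pow hp, Finsupp.single_eq_same] at this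
      omega
    exact ⟨(a, j), ⟨⟨ha1, hae, by omega⟩, by omega⟩, by rw [mul_comm] at hda; exact hda⟩
  · rintro ⟨⟨a, j⟩, ⟨⟨ha1, hae, -⟩, hjt⟩, rfl⟩
    have hjt' : j ≤ t := by omega
    have ha0 : a ≠ 0 := by rintro rfl; simp at hae; omega
    have ha2 : 2 ≤ a := by omega
    have hpa : ¬ p ∣ a := fun h => hpe (h.trans hae)
    refine ⟨?_, mul_dvd_mul hae (pow_dvd_pow p hjt'), fun q hq hqd => ?_⟩
    · calc 2 ≤ a := ha2
      _ = a * 1 := (mul_one a).symm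
      _ ≤ a * p ^ j := Nat.mul_le_mul_left a (Nat.one_le_pow _ _ (by omega))
    · exfalso
      have hqp : q ∣ p ^ n := hqd.trans (Nat.gcd_dvd_right _ _)
      have hqp' : q = p := (Nat.prime_dvd_prime_iff_eq hq hp).mp (hq.dvd_of_dvd_pow hqp)
      rw [hqp'] at hqd
      have hrd : e * p ^ t / (a * p ^ j) = e / a * p ^ (t - j) := by
        rw [← Nat.div_mul_div_comm hae (pow_dvd_pow p hjt'), Nat.pow_div hjt' (by omega)]
      have hpd : p ∣ b ^ (e * p ^ t / (a * p ^ j)) - 1 :=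
        hqd.trans (Nat.gcd_dvd_left _ _)
      rw [hrd] at hpd
      have hedvd : e ∣ e / a * p ^ (t - j) := (ord_dvd_iff b p _ (by omega)).mp hpd
      obtain ⟨k, hk⟩ := hae
      have hk0 : k ≠ 0 := by rintro rfl; rw [mul_zero] at hk; omega
      have hek : e / a = k := by
        rw [hk]; exact Nat.mul_div_cancel_left k (by omega)
      rw [hek] at hedvd
      have hcop : Nat.Coprime e (p ^ (t - j)) :=
        Nat.Coprime.pow_right _ ((Nat.Prime.coprime_iff_not_dvd hp).mpr hpe).symm
      have h5 : e ∣ k := hcop.dvd_of_dvd_mul_right hedvd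
      have := Nat.le_of_dvd (by omega) h5
      rw [hk] at this
      nlinarith
end

theorem stmt7 (b p n m : ℕ) (hb : 2 ≤ b) (hp : p.Prime) (hodd : Odd p)
    (hpb : ¬ p ∣ b) (hn : 1 ≤ n) (hm : m = (b ^ ord b p - 1).factorization p) :
    (n ≤ m → (MidySet b (p ^ n)).ncard = (MidySet b p).ncard) ∧
    (m < n → (MidySet b (p ^ n)).ncard = (n - m + 1) * (MidySet b p).ncard) := by
  subst hm
  haveI : NeZero p := ⟨hp.ne_zero⟩
  have hppos := hp.two_le
  have hmpos := m_pos hb hp hpb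
  have hepos := ord_p_pos hb hp hpb
  have hpe := p_not_dvd_ord hb hp hpb
  have hmidy1 : MidySet b p = ↑((ord b p).divisors.erase 1) := by
    have h := midy_le hb hp hpb (n := 1) le_rfl hmpos
    rwa [pow_one] at h
  constructor
  · intro h
    rw [midy_le hb hp hpb hn h, hmidy1]
  · intro h
    rw [midy_gt hb hp hodd hpb h, hmidy1, Set.ncard_coe_finset, Set.ncard_coe_finset]
    have hinj : Set.InjOn (fun q : ℕ × ℕ => q.1 * p ^ q.2)
        ↑(((ord b p).divisors.erase 1) ×ˢ
          Finset.range (n - (b ^ ord b p - 1).factorization p + 1)) := by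
      have key : ∀ z : ℕ × ℕ, z.1 ∣ ord b p → z.1 ≠ 0 →
          (z.1 * p ^ z.2).factorization p = z.2 := by
        intro z h1 h0
        rw [Nat.factorization_mul h0 (pow_ne_zero _ hp.ne_zero)]
        have hz : ¬ p ∣ z.1 := fun hc => hpe (hc.trans h1)
        simp [Nat.factorization_eq_zero_of_not_dvd hz, Nat.Prime.factorization_pow hp]
      intro x hx y hy hxy
      simp only [Finset.coe_product, Set.mem_prod, Finset.mem_coe, Finset.mem_erase,
        Nat.mem_divisors, Finset.mem_range] at hx hy
      obtain ⟨⟨hx1, hx2, -⟩, -⟩ := hx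
      obtain ⟨⟨hy1, hy2, -⟩, -⟩ := hy
      have hx0 : x.1 ≠ 0 := by rintro hc; rw [hc] at hx2; simp at hx2; omega
      have hy0 : y.1 ≠ 0 := by rintro hc; rw [hc] at hy2; simp at hy2; omega
      have hj : x.2 = y.2 := by
        have := congrArg (fun z => z.factorization p) hxy
        simpa [key x hx2 hx0, key y hy2 hy0] using this
      have ha : x.1 = y.1 := by
        simp only at hxy
        rw [hj] at hxy
        exact Nat.eq_of_mul_eq_mul_right (pow_pos (by omega) _) hxy
      exact Prod.ext ha hj
    rw [Finset.card_image_of_injOn hinj, Finset.card_product, Finset.card_range, mul_comm]
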